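/- Let u and v be vertices of a complete d-ary tree of height h, with least common ancestor c. Let u', v', c' be the depths (distances to the root) of u, v, c. Then the hitting time from u to v equals f_{h-c'}(d) - f_{h-u'}(d) + g_{h,v'}(d) - g_{h,c'}(d), where f and g are defined by f_0 = 0, f_n(d) = (Σ_{i=0}^{n-1}(2n-2i)d^i) - n for n ≥ 1, g_{k,0} = 0, g_{k,m}(d) = (Σ_{i=0}^{m-1}(2m-2i)d^{k-i}) - m for m ≥ 1. -/

import Mathlib

open scoped Classical

/-- Transition probability of the simple random walk on `G`. -/
noncomputable def stepProb {V : Type*} [Fintype V] (G : SimpleGraph V) (a b : V) : ℝ :=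
  if G.Adj a b then 1 / (G.degree a) else 0

/-- Probability that the simple random walk started at `u` follows the step sequence `w`. -/
noncomputable def walkProb {V : Type*} [Fintype V] (G : SimpleGraph V) :
    (u : V) → {n : ℕ} → (Fin n → V) → ℝ
  | _, 0, _ => 1
  | u, n + 1, w => stepProb G u (w 0) * walkProb G (w 0) (fun i : Fin n => w i.succ)

/-- Probability that the walk started at `u` first reaches `v` at time exactly `n` (for `n ≥ 1`). -/
noncomputable def firstHitProb {V : Type*} [Fintype V] (G : SimpleGraph V) (u v : V) (n : ℕ) : ℝ :=
  ∑ w ∈ Finset.univ.filter (fun w : Fin n → V =>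
      (∀ i : Fin n, (i : ℕ) + 1 < n → w i ≠ v) ∧ ∀ i : Fin n, (i : ℕ) + 1 = n → w i = v),
    walkProb G u w

/-- Expected hitting time of `v` for the simple random walk on `G` started at `u`. -/
noncomputable def hittingTime {V : Type*} [Fintype V] (G : SimpleGraph V) (u v : V) : ℝ :=
  if u = v then 0 else ∑' n : ℕ, (n : ℝ) * firstHitProb G u v n

/-- Expected first return time to `v` of the simple random walk on `G` started at `v`. -/
noncomputable def expectedReturnTime {V : Type*} [Fintype V] (G : SimpleGraph V) (v : V) : ℝ :=
  ∑' n : ℕ, (n : ℝ) * firstHitProb G v v n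
/-- The polynomial `f_n(d)` from the hitting-time formulas for complete `d`-ary trees. -/
noncomputable def f (n : ℕ) (d : ℝ) : ℝ :=
  if n = 0 then 0 else (∑ i ∈ Finset.range n, ((2 * n : ℝ) - 2 * i) * d ^ i) - n

/-- The polynomial `g_{k,m}(d)` from the hitting-time formulas for complete `d`-ary trees. -/
noncomputable def g (k m : ℕ) (d : ℝ) : ℝ :=
  if m = 0 then 0 else (∑ i ∈ Finset.range m, ((2 * m : ℝ) - 2 * i) * d ^ (k - i)) - m

/-- The complete `d`-ary tree of height `h`: vertices are sequences over `Fin d` of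
length at most `h`, and a vertex is adjacent to each of its one-step extensions. -/
def daryTree (d h : ℕ) : SimpleGraph (Σ n : Fin (h + 1), Fin (n : ℕ) → Fin d) :=
  SimpleGraph.fromRel (fun x y =>
    ∃ _ : (x.1 : ℕ) + 1 = (y.1 : ℕ),
      ∀ i : Fin (x.1 : ℕ), y.2 ⟨i.val, by have := i.isLt; omega⟩ = x.2 i)

/-- `a` is an ancestor of `x` in the complete `d`-ary tree: `a` is a prefix of `x`. -/
def isAncestor {d h : ℕ} (a x : Σ n : Fin (h + 1), Fin (n : ℕ) → Fin d) : Prop :=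
  ∃ _ : (a.1 : ℕ) ≤ (x.1 : ℕ),
    ∀ i : Fin (a.1 : ℕ), a.2 i = x.2 ⟨i.val, by have := i.isLt; omega⟩

/-!
The expected hitting time `H x` of `v` is the unique function with `H v = 0` satisfying the
first-step equations `H x = 1 + ∑ y, p x y * H y` for `x ≠ v`: the hitting time solves them once
it is written as `∑ₙ P(T > n)`, a series that converges geometrically on a finite connected graph,
and uniqueness is the maximum principle. Equivalently, `H = φ - φ v` for any `φ` whose graph
Laplacian `∑_{y ∼ x} (φ y - φ x)` equals `-deg x` off `v`.

On the tree take `φ x = -C ℓ(x) - f_{h - |x|}(d)`, where `ℓ(x)` is the depth of the LCA of `x`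
and `v` and `C = 2 ∑_{i=1}^{h} dⁱ`. The Laplacian of `x ↦ f_{h-|x|}(d)` is `deg x` except at the
root, where it is `deg - C`; that of `ℓ` vanishes off `v` except at the root, where it is `1`.
So `φ` qualifies, and `φ u - φ v` is the claimed formula because `f_{h-ℓ} - g_{h,ℓ}` is affine in
`ℓ` with slope `-C`.
-/

open Finset Filter Topology

lemma summable_of_antitone_of_le_pow {f : ℕ → ℝ} (hf : Antitone f) (hf0 : ∀ n, 0 ≤ f n)
    {m : ℕ} [NeZero m] {ρ : ℝ} (hρ0 : 0 ≤ ρ) (hρ1 : ρ < 1) (hle : ∀ k, f (k * m) ≤ ρ ^ k) :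
    Summable f := by
  rw [← (Nat.divModEquiv m).symm.summable_iff, summable_prod_of_nonneg (f := f ∘ _) fun _ => hf0 _]
  refine ⟨fun _ => .of_finite, .of_nonneg_of_le (fun _ => tsum_nonneg fun _ => hf0 _)
    (fun k => ?_) ((summable_geometric_of_lt_one hρ0 hρ1).mul_left (m : ℝ))⟩
  calc ∑' r : Fin m, f (k * m + r) ≤ ∑ _r : Fin m, ρ ^ k := by
        rw [tsum_fintype]
        exact sum_le_sum fun r _ => (hf (Nat.le_add_right _ _)).trans (hle k)
    _ = m * ρ ^ k := by simp

lemma tendsto_nat_mul_of_antitone_of_summable {f : ℕ → ℝ} (hf : Antitone f)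
    (hf0 : ∀ n, 0 ≤ f n) (hs : Summable f) :
    Tendsto (fun n : ℕ => (n : ℝ) * f n) atTop (𝓝 0) := by
  -- `(n - n / 2) f n` is at most the block `∑ i ∈ [n / 2, n), f i` of a convergent series
  have hblock : Tendsto (fun n => ∑ i ∈ range n, f i - ∑ i ∈ range (n / 2), f i) atTop (𝓝 0) := by
    have hS := hs.hasSum.tendsto_sum_nat
    simpa using hS.sub (hS.comp (Nat.tendsto_div_const_atTop two_ne_zero))
  refine squeeze_zero (fun n => mul_nonneg n.cast_nonneg (hf0 n)) (fun n => ?_)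
    (by simpa using hblock.const_mul 2)
  have hle : ((n - n / 2 : ℕ) : ℝ) * f n ≤ ∑ i ∈ range n, f i - ∑ i ∈ range (n / 2), f i := by
    rw [← sum_range_add_sum_Ico _ (Nat.div_le_self n 2), add_sub_cancel_left]
    simpa using sum_le_sum fun i (hi : i ∈ Ico (n / 2) n) => hf (mem_Ico.mp hi).2.le
  have hn : (n : ℝ) ≤ 2 * ((n - n / 2 : ℕ) : ℝ) := by
    rw [Nat.cast_sub (Nat.div_le_self n 2)]
    have : ((n / 2 : ℕ) : ℝ) ≤ n / 2 := Nat.cast_div_le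
    linarith
  nlinarith [hf0 n]

section RandomWalk

variable {V : Type*}

def IsFirstHit (v : V) {n : ℕ} (w : Fin n → V) : Prop :=
  (∀ i : Fin n, (i : ℕ) + 1 < n → w i ≠ v) ∧ ∀ i : Fin n, (i : ℕ) + 1 = n → w i = v

lemma isFirstHit_one_iff {v : V} (w : Fin 1 → V) : IsFirstHit v w ↔ w 0 = v := by
  simp [IsFirstHit, Fin.forall_fin_one]

lemma isFirstHit_cons_iff {v : V} {n : ℕ} (x : V) (w : Fin (n + 1) → V) :
    IsFirstHit v (Fin.cons x w : Fin (n + 2) → V) ↔ x ≠ v ∧ IsFirstHit v w := by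
  simp [IsFirstHit, Fin.forall_fin_succ (n := n + 1), and_assoc]

variable [Fintype V] (G : SimpleGraph V)

lemma stepProb_nonneg (a b : V) : 0 ≤ stepProb G a b := by
  unfold stepProb; split <;> positivity

lemma stepProb_pos {a b : V} (hab : G.Adj a b) : 0 < stepProb G a b := by
  have : 0 < G.degree a := G.degree_pos_iff_exists_adj a |>.mpr ⟨b, hab⟩
  rw [stepProb, if_pos hab]
  positivity

lemma sum_stepProb_mul (a : V) (φ : V → ℝ) :
    ∑ b, stepProb G a b * φ b = (G.degree a : ℝ)⁻¹ * ∑ b ∈ G.neighborFinset a, φ b := by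
  simp only [stepProb, G.neighborFinset_eq_filter, sum_filter, mul_sum, ite_mul, mul_ite, zero_mul,
    mul_zero, one_div]

lemma sum_stepProb_le_one (a : V) : ∑ b, stepProb G a b ≤ 1 := by
  have := sum_stepProb_mul G a 1
  simp only [Pi.one_apply, mul_one, sum_const, G.card_neighborFinset_eq_degree,
    nsmul_eq_mul] at this
  rw [this]
  exact inv_mul_le_one_of_le₀ le_rfl (by positivity)

lemma sum_stepProb {a : V} (ha : 0 < G.degree a) : ∑ b, stepProb G a b = 1 := by
  simpa [ha.ne'] using sum_stepProb_mul G a 1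

lemma degree_pos_of_preconnected (hG : G.Preconnected) {a v : V} (hav : a ≠ v) :
    0 < G.degree a := by
  obtain ⟨p⟩ := hG a v
  cases p with
  | nil => exact absurd rfl hav
  | cons hab _ => exact G.degree_pos_iff_exists_adj a |>.mpr ⟨_, hab⟩

lemma eq_one_add_sum_stepProb_mul {a : V} (ha : 0 < G.degree a) {φ : V → ℝ}
    (hφ : ∑ b ∈ G.neighborFinset a, (φ b - φ a + 1) = 0) :
    φ a = 1 + ∑ b, stepProb G a b * φ b := by
  rw [sum_add_distrib, sum_sub_distrib, sum_const, sum_const, G.card_neighborFinset_eq_degree,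
    nsmul_eq_mul, nsmul_eq_mul, mul_one] at hφ
  have : (G.degree a : ℝ) ≠ 0 := by positivity
  rw [sum_stepProb_mul]
  field_simp
  linarith

lemma sum_fin_succ_pi {n : ℕ} (F : (Fin (n + 1) → V) → ℝ) :
    ∑ w, F w = ∑ x, ∑ w : Fin n → V, F (Fin.cons x w) := by
  rw [← (Fin.consEquiv fun _ => V).sum_comp, Fintype.sum_prod_type]
  rfl

lemma firstHitProb_eq (u v : V) (n : ℕ) :
    firstHitProb G u v n = ∑ w ∈ univ.filter (IsFirstHit (n := n) v), walkProb G u w := by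
  unfold firstHitProb IsFirstHit
  convert rfl

lemma walkProb_cons {n : ℕ} (u x : V) (w : Fin n → V) :
    walkProb G u (Fin.cons x w) = stepProb G u x * walkProb G x w := by
  simp only [walkProb, Fin.cons_zero, Fin.cons_succ]

lemma walkProb_nonneg {n : ℕ} (u : V) (w : Fin n → V) : 0 ≤ walkProb G u w := by
  induction n generalizing u with
  | zero => simp [walkProb]
  | succ n ih => exact mul_nonneg (stepProb_nonneg G _ _) (ih _ _)

lemma firstHitProb_nonneg (u v : V) (n : ℕ) : 0 ≤ firstHitProb G u v n :=
  sum_nonneg fun w _ => walkProb_nonneg G u w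

lemma firstHitProb_one (u v : V) : firstHitProb G u v 1 = stepProb G u v := by
  rw [firstHitProb_eq, sum_filter, sum_fin_succ_pi]
  simp [isFirstHit_one_iff, walkProb]

lemma firstHitProb_add_two (u v : V) (n : ℕ) :
    firstHitProb G u v (n + 2) =
      ∑ x, if x = v then 0 else stepProb G u x * firstHitProb G x v (n + 1) := by
  rw [firstHitProb_eq, sum_filter, sum_fin_succ_pi]
  refine sum_congr rfl fun x _ => ?_
  simp only [isFirstHit_cons_iff, walkProb_cons, firstHitProb_eq, sum_filter, mul_sum]
  split_ifs with hx
  · simp [hx]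
  · simp [hx, mul_ite]

section Avoidance

variable (v : V)

/-- Probability that the walk started at `u` avoids `v` at the times `1, …, n` (time `0` is not
looked at). -/
noncomputable def avoidProb : ℕ → V → ℝ
  | 0, _ => 1
  | n + 1, u => ∑ x, if x = v then 0 else stepProb G u x * avoidProb n x

@[simp] lemma avoidProb_zero (u : V) : avoidProb G v 0 u = 1 := rfl

lemma avoidProb_succ (n : ℕ) (u : V) :
    avoidProb G v (n + 1) u = ∑ x, if x = v then 0 else stepProb G u x * avoidProb G v n x := rfl

lemma avoidProb_nonneg (n : ℕ) (u : V) : 0 ≤ avoidProb G v n u := by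
  induction n generalizing u with
  | zero => simp
  | succ n ih =>
    refine sum_nonneg fun x _ => ?_
    split_ifs
    · rfl
    · exact mul_nonneg (stepProb_nonneg G u x) (ih x)

lemma avoidProb_succ_le_sum (n : ℕ) (u : V) (hn : ∀ x, avoidProb G v n x ≤ 1) :
    avoidProb G v (n + 1) u ≤ ∑ x, if x = v then 0 else stepProb G u x := by
  refine sum_le_sum fun x _ => ?_
  split_ifs
  · rfl
  · exact mul_le_of_le_one_right (stepProb_nonneg G u x) (hn x)

lemma avoidProb_le_one (n : ℕ) (u : V) : avoidProb G v n u ≤ 1 := by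
  induction n generalizing u with
  | zero => simp
  | succ n ih =>
    refine (avoidProb_succ_le_sum G v n u ih).trans ((sum_le_sum fun x _ => ?_).trans
      (sum_stepProb_le_one G u))
    split_ifs
    · exact stepProb_nonneg G u x
    · rfl

lemma avoidProb_antitone (u : V) : Antitone fun n => avoidProb G v n u := by
  refine antitone_nat_of_succ_le fun n => ?_
  induction n generalizing u with
  | zero => exact avoidProb_le_one G v 1 u
  | succ n ih =>
    refine sum_le_sum fun x _ => ?_
    split_ifs
    · rfl
    · exact mul_le_mul_of_nonneg_left (ih x) (stepProb_nonneg G u x)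

end Avoidance

variable {v : V}

lemma sum_ite_eq_sub (φ : V → ℝ) : ∑ x, (if x = v then 0 else φ x) = ∑ x, φ x - φ v := by
  rw [← sum_erase_add univ _ (mem_univ v), if_pos rfl, add_zero,
    ← sum_erase_add univ φ (mem_univ v), add_sub_cancel_right]
  exact sum_congr rfl fun x hx => if_neg (ne_of_mem_erase hx)

lemma firstHitProb_succ (hdeg : ∀ x, x ≠ v → 0 < G.degree x) (n : ℕ) {u : V} (hu : u ≠ v) :
    firstHitProb G u v (n + 1) = avoidProb G v n u - avoidProb G v (n + 1) u := by
  induction n generalizing u with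
  | zero =>
    rw [firstHitProb_one, avoidProb_succ, sum_ite_eq_sub]
    simp [sum_stepProb G (hdeg u hu)]
  | succ n ih =>
    rw [firstHitProb_add_two, avoidProb_succ, avoidProb_succ G v (n + 1), ← sum_sub_distrib]
    refine sum_congr rfl fun x _ => ?_
    split_ifs with hx
    · simp
    · rw [ih hx, mul_sub]

lemma sum_range_succ_mul_firstHitProb (hdeg : ∀ x, x ≠ v → 0 < G.degree x) {u : V} (hu : u ≠ v)
    (M : ℕ) : ∑ n ∈ range (M + 1), (n : ℝ) * firstHitProb G u v n =
      ∑ n ∈ range M, avoidProb G v n u - M * avoidProb G v M u := by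
  induction M with
  | zero => simp
  | succ M ih =>
    rw [sum_range_succ, ih, firstHitProb_succ G hdeg M hu, sum_range_succ]
    push_cast
    ring

lemma avoidProb_lt_one (hdeg : ∀ x, x ≠ v → 0 < G.degree x) (n : ℕ) {x : V} (hx : x ≠ v)
    (p : G.Walk x v) (hn : p.length ≤ n) : avoidProb G v n x < 1 := by
  induction n generalizing x with
  | zero => exact absurd (p.eq_of_length_eq_zero (Nat.le_zero.mp hn)) hx
  | succ n ih =>
    cases p with
    | nil => exact absurd rfl hx
    | @cons _ y _ hxy q =>
      have hstep := sum_ite_eq_sub (v := v) (stepProb G x)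
      rw [sum_stepProb G (hdeg x hx)] at hstep
      by_cases hy : y = v
      · subst hy
        have := avoidProb_succ_le_sum G y n x (avoidProb_le_one G y n)
        linarith [stepProb_pos G hxy]
      · have hlt : avoidProb G v (n + 1) x < ∑ z, (if z = v then 0 else stepProb G x z) := by
          refine sum_lt_sum (fun z _ => ?_) ⟨y, mem_univ y, ?_⟩
          · split_ifs
            · rfl
            · exact mul_le_of_le_one_right (stepProb_nonneg G x z) (avoidProb_le_one G v n z)
          · rw [if_neg hy, if_neg hy]
            exact mul_lt_of_lt_one_right (stepProb_pos G hxy)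
              (ih hy q (by simpa using hn))
        linarith [stepProb_nonneg G x v]

lemma avoidProb_add_le {b : ℕ} {ρ : ℝ} (hρ : ∀ x, x ≠ v → avoidProb G v b x ≤ ρ) (a : ℕ)
    {u : V} (hu : u ≠ v) : avoidProb G v (a + b) u ≤ avoidProb G v a u * ρ := by
  induction a generalizing u with
  | zero => simpa using hρ u hu
  | succ a ih =>
    rw [Nat.add_right_comm, avoidProb_succ, avoidProb_succ, sum_mul]
    refine sum_le_sum fun x _ => ?_
    split_ifs with hx
    · simp
    · rw [mul_assoc]
      exact mul_le_mul_of_nonneg_left (ih hx) (stepProb_nonneg G u x)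

lemma avoidProb_mul_le_pow {b : ℕ} {ρ : ℝ} (hρ0 : 0 ≤ ρ)
    (hρ : ∀ x, x ≠ v → avoidProb G v b x ≤ ρ) (k : ℕ) {u : V} (hu : u ≠ v) :
    avoidProb G v (k * b) u ≤ ρ ^ k := by
  induction k with
  | zero => simp
  | succ k ih =>
    rw [Nat.succ_mul, pow_succ]
    exact (avoidProb_add_le G hρ _ hu).trans (mul_le_mul_of_nonneg_right ih hρ0)

lemma exists_avoidProb_card_le (hG : G.Preconnected) :
    ∃ ρ, 0 ≤ ρ ∧ ρ < 1 ∧ ∀ x, x ≠ v → avoidProb G v (Fintype.card V) x ≤ ρ := by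
  have : Nonempty V := ⟨v⟩
  obtain ⟨x₀, hx₀⟩ := Finite.exists_max fun x => if x = v then 0 else
    avoidProb G v (Fintype.card V) x
  refine ⟨_, by simpa using hx₀ v, ?_, fun x hx => by simpa [hx] using hx₀ x⟩
  split_ifs with h
  · exact zero_lt_one
  · obtain ⟨p, hp⟩ := (hG x₀ v).exists_isPath
    exact avoidProb_lt_one G (fun x hx => degree_pos_of_preconnected G hG hx) _ h p
      hp.length_lt.le

lemma summable_avoidProb (hG : G.Preconnected) {u : V} (hu : u ≠ v) :
    Summable fun n => avoidProb G v n u := by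
  obtain ⟨ρ, hρ0, hρ1, hρ⟩ := exists_avoidProb_card_le G hG
  have : Nonempty V := ⟨v⟩
  have : NeZero (Fintype.card V) := ⟨Fintype.card_ne_zero⟩
  exact summable_of_antitone_of_le_pow (avoidProb_antitone G v u) (avoidProb_nonneg G v · u)
    hρ0 hρ1 fun k => avoidProb_mul_le_pow G hρ0 hρ k hu

lemma hittingTime_eq_tsum_avoidProb (hG : G.Preconnected) {u : V} (hu : u ≠ v) :
    hittingTime G u v = ∑' n, avoidProb G v n u := by
  have hdeg := fun x (hx : x ≠ v) => degree_pos_of_preconnected G hG hx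
  have hs := summable_avoidProb G hG hu
  -- the tail-sum formula, the boundary term `M * avoidProb G v M u` tending to `0`
  have hlim : Tendsto (fun M => ∑ n ∈ range (M + 1), (n : ℝ) * firstHitProb G u v n) atTop
      (𝓝 (∑' n, avoidProb G v n u)) := by
    simp_rw [sum_range_succ_mul_firstHitProb G hdeg hu]
    simpa using hs.hasSum.tendsto_sum_nat.sub (tendsto_nat_mul_of_antitone_of_summable
      (avoidProb_antitone G v u) (avoidProb_nonneg G v · u) hs)
  rw [hittingTime, if_neg hu]
  refine ((hasSum_iff_tendsto_nat_of_nonneg (fun n => mul_nonneg n.cast_nonneg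
    (firstHitProb_nonneg G u v n)) _).mpr ?_).tsum_eq
  exact (tendsto_add_atTop_iff_nat 1).mp hlim

lemma hittingTime_eq_one_add_sum (hG : G.Preconnected) {u : V} (hu : u ≠ v) :
    hittingTime G u v = 1 + ∑ x, stepProb G u x * hittingTime G x v := by
  have hterm : ∀ x, Summable fun n =>
      if x = v then (0 : ℝ) else stepProb G u x * avoidProb G v n x := fun x => by
    split_ifs with hx
    · exact summable_zero
    · exact (summable_avoidProb G hG hx).mul_left _
  rw [hittingTime_eq_tsum_avoidProb G hG hu, (summable_avoidProb G hG hu).tsum_eq_zero_add,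
    avoidProb_zero]
  simp_rw [avoidProb_succ]
  rw [Summable.tsum_finsetSum fun x _ => hterm x]
  refine congrArg _ (sum_congr rfl fun x _ => ?_)
  split_ifs with hx
  · simp [hx, hittingTime]
  · rw [tsum_mul_left, hittingTime_eq_tsum_avoidProb G hG hx]

lemma nonpos_of_harmonic (hG : G.Preconnected) {y : V → ℝ} (hv : y v = 0)
    (hy : ∀ x, x ≠ v → y x = ∑ z, stepProb G x z * y z) (u : V) : y u ≤ 0 := by
  have : Nonempty V := ⟨v⟩
  obtain ⟨x₀, hx₀⟩ := Finite.exists_max y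
  -- the maximum propagates along any walk to `v`, where `y` vanishes
  suffices ∀ x w (p : G.Walk x w), w = v → y x = y x₀ → y x₀ ≤ 0 from
    (hx₀ u).trans (this x₀ v (hG x₀ v).some rfl rfl)
  intro x w p
  induction p with
  | nil => exact fun hx hxx => hxx ▸ hx ▸ hv.le
  | @cons x z _ hxz _ ih =>
    intro hw hx
    by_cases hxv : x = v
    · rw [← hx, hxv, hv]
    refine ih hw (le_antisymm (hx₀ z) ?_)
    have hsum : ∑ w, stepProb G x w * (y x₀ - y w) = 0 := by
      simp_rw [mul_sub, sum_sub_distrib, ← sum_mul, sum_stepProb G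
        (degree_pos_of_preconnected G hG hxv), one_mul, ← hy x hxv, hx, sub_self]
    have := (sum_eq_zero_iff_of_nonneg fun w _ => mul_nonneg (stepProb_nonneg G x w)
      (sub_nonneg.mpr (hx₀ w))).mp hsum z (mem_univ z)
    have := stepProb_pos G hxz
    nlinarith

theorem hittingTime_eq_of_harmonic (hG : G.Preconnected) {H : V → ℝ} (hv : H v = 0)
    (hH : ∀ x, x ≠ v → H x = 1 + ∑ z, stepProb G x z * H z) (u : V) :
    hittingTime G u v = H u := by
  have hharm : ∀ s : ℝ, ∀ x, x ≠ v → s * (hittingTime G x v - H x) =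
      ∑ z, stepProb G x z * (s * (hittingTime G z v - H z)) := fun s x hx => by
    rw [hittingTime_eq_one_add_sum G hG hx, hH x hx]
    simp_rw [mul_left_comm _ s, ← mul_sum, mul_sub, sum_sub_distrib]
    ring
  have hvv : ∀ s : ℝ, s * (hittingTime G v v - H v) = 0 := by simp [hittingTime, hv]
  have h1 := nonpos_of_harmonic G hG (hvv 1) (hharm 1) u
  have h2 := nonpos_of_harmonic G hG (hvv (-1)) (hharm (-1)) u
  linarith

theorem hittingTime_eq_sub_of_laplacian (hG : G.Preconnected) {φ : V → ℝ}
    (hφ : ∀ x, x ≠ v → ∑ y ∈ G.neighborFinset x, (φ y - φ x + 1) = 0) (u : V) :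
    hittingTime G u v = φ u - φ v := by
  refine hittingTime_eq_of_harmonic G hG (H := fun x => φ x - φ v) (sub_self _) (fun x hx => ?_) u
  refine eq_one_add_sum_stepProb_mul G (φ := fun x => φ x - φ v)
    (degree_pos_of_preconnected G hG hx) ?_
  simpa using hφ x hx

end RandomWalk

section Polynomials

variable (D : ℝ)

lemma sum_range_two_mul_sub_succ (w : ℕ → ℝ) (n : ℕ) :
    (∑ i ∈ range (n + 1), (2 * ((n + 1 : ℕ) : ℝ) - 2 * i) * w i - ((n + 1 : ℕ) : ℝ)) -
      (∑ i ∈ range n, (2 * (n : ℝ) - 2 * i) * w i - n) = 2 * ∑ i ∈ range (n + 1), w i - 1 := by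
  have hsplit : ∑ i ∈ range n, (2 * ((n + 1 : ℕ) : ℝ) - 2 * i) * w i =
      ∑ i ∈ range n, (2 * (n : ℝ) - 2 * i) * w i + 2 * ∑ i ∈ range n, w i := by
    rw [mul_sum, ← sum_add_distrib]
    refine sum_congr rfl fun i _ => ?_
    push_cast
    ring
  rw [sum_range_succ, hsplit, sum_range_succ w]
  push_cast
  ring

lemma f_eq (n : ℕ) : f n D = ∑ i ∈ range n, (2 * (n : ℝ) - 2 * i) * D ^ i - n := by
  unfold f
  split_ifs with hn <;> simp [hn]

lemma g_eq (k m : ℕ) : g k m D = ∑ i ∈ range m, (2 * (m : ℝ) - 2 * i) * D ^ (k - i) - m := by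
  unfold g
  split_ifs with hm <;> simp [hm]

lemma f_succ_sub (n : ℕ) : f (n + 1) D - f n D = 2 * ∑ i ∈ range (n + 1), D ^ i - 1 := by
  rw [f_eq, f_eq]
  exact sum_range_two_mul_sub_succ _ n

lemma g_succ_sub (k m : ℕ) :
    g k (m + 1) D - g k m D = 2 * ∑ i ∈ range (m + 1), D ^ (k - i) - 1 := by
  rw [g_eq, g_eq]
  exact sum_range_two_mul_sub_succ _ m

lemma sum_range_pow_add_sum_range_pow_sub {h l : ℕ} (hl : l ≤ h) :
    ∑ i ∈ range (h - l), D ^ i + ∑ i ∈ range (l + 1), D ^ (h - i) =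
      ∑ i ∈ range (h + 1), D ^ i := by
  induction l with
  | zero => simp [sum_range_succ]
  | succ l ih =>
    obtain ⟨m, rfl⟩ := Nat.exists_eq_add_of_le hl
    have := ih (by omega)
    rw [show l + 1 + m - l = m + 1 by omega, sum_range_succ _ m] at this
    rw [sum_range_succ _ (l + 1), show l + 1 + m - (l + 1) = m by omega, ← this]
    ring

lemma f_sub_g {h l : ℕ} (hl : l ≤ h) :
    f (h - l) D - g h l D = f h D - l * (2 * D * ∑ i ∈ range h, D ^ i) := by
  induction l with
  | zero => simp [g]
  | succ l ih =>
    have hf := f_succ_sub D (h - (l + 1))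
    rw [show h - (l + 1) + 1 = h - l by omega] at hf
    have hsum := sum_range_pow_add_sum_range_pow_sub D (show l ≤ h by omega)
    rw [geom_sum_succ] at hsum
    push_cast
    linear_combination ih (by omega) - hf - g_succ_sub D h l - 2 * hsum

end Polynomials

namespace daryTree

variable {d h : ℕ}

local notation:max "depth " x:max => ((x.1 : ℕ))

abbrev Vertex (d h : ℕ) := Σ n : Fin (h + 1), Fin (n : ℕ) → Fin d

lemma depth_le (x : Vertex d h) : depth x ≤ h := Nat.lt_succ_iff.mp x.1.isLt

lemma vertex_eq_iff {x y : Vertex d h} : x = y ↔ depth x = depth y ∧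
    ∀ i (hx : i < depth x) (hy : i < depth y), x.2 ⟨i, hx⟩ = y.2 ⟨i, hy⟩ := by
  refine ⟨fun hxy => hxy ▸ ⟨rfl, fun _ _ _ => rfl⟩, fun ⟨hd, hc⟩ => ?_⟩
  obtain ⟨⟨n, hn⟩, x⟩ := x
  obtain ⟨⟨m, hm⟩, y⟩ := y
  obtain rfl : n = m := hd
  exact Sigma.ext rfl (heq_of_eq (funext fun i => hc i i.2 i.2))

/-- The ancestor of `x` at depth `k`. -/
def take (x : Vertex d h) (k : ℕ) (hk : k ≤ depth x) : Vertex d h :=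
  ⟨⟨k, by have := depth_le x; omega⟩, fun i => x.2 ⟨i, i.2.trans_le hk⟩⟩

def parent (x : Vertex d h) : Vertex d h := take x (depth x - 1) (Nat.sub_le _ _)

def child (x : Vertex d h) (hx : depth x < h) (j : Fin d) : Vertex d h :=
  ⟨⟨depth x + 1, by omega⟩, fun i => if hi : (i : ℕ) < depth x then x.2 ⟨i, hi⟩ else j⟩

@[simp] lemma depth_parent (x : Vertex d h) : depth (parent x) = depth x - 1 := rfl

@[simp] lemma depth_child (x : Vertex d h) (hx : depth x < h) (j : Fin d) :
    depth (child x hx j) = depth x + 1 := rfl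

lemma child_coord_of_lt (x : Vertex d h) (hx : depth x < h) (j : Fin d) (i : ℕ)
    (hi : i < depth (child x hx j)) (hix : i < depth x) : (child x hx j).2 ⟨i, hi⟩ = x.2 ⟨i, hix⟩ :=
  dif_pos hix

lemma child_coord_depth (x : Vertex d h) (hx : depth x < h) (j : Fin d)
    (hi : depth x < depth (child x hx j)) : (child x hx j).2 ⟨depth x, hi⟩ = j :=
  dif_neg (lt_irrefl _)

lemma child_injective (x : Vertex d h) (hx : depth x < h) : Function.Injective (child x hx) :=
  fun j j' hjj' => by
    have := (vertex_eq_iff.mp hjj').2 (depth x) (by simp) (by simp)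
    exact (child_coord_depth x hx j _).symm.trans (this.trans (child_coord_depth x hx j' _))

lemma eq_parent_iff {x y : Vertex d h} (hy : 0 < depth y) : x = parent y ↔
    depth x + 1 = depth y ∧
      ∀ i (hx : i < depth x) (hy : i < depth y), x.2 ⟨i, hx⟩ = y.2 ⟨i, hy⟩ := by
  have := depth_parent y
  rw [vertex_eq_iff]
  constructor
  · rintro ⟨hd, hc⟩
    exact ⟨by omega, fun i hx _ => hc i hx (by omega)⟩
  · rintro ⟨hd, hc⟩
    exact ⟨by omega, fun i hx _ => hc i hx (by omega)⟩

lemma adj_iff (x y : Vertex d h) : (daryTree d h).Adj x y ↔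
    (0 < depth x ∧ y = parent x) ∨ (0 < depth y ∧ x = parent y) := by
  have hrel : ∀ a b : Vertex d h, (∃ _ : depth a + 1 = depth b,
      ∀ i : Fin (depth a), b.2 ⟨i, by omega⟩ = a.2 i) ↔
        0 < depth b ∧ a = parent b := by
    intro a b
    constructor
    · rintro ⟨hab, hc⟩
      exact ⟨by omega, (eq_parent_iff (by omega)).mpr ⟨hab, fun i hi _ => (hc ⟨i, hi⟩).symm⟩⟩
    · rintro ⟨hb, hab⟩
      obtain ⟨hd, hc⟩ := (eq_parent_iff hb).mp hab
      exact ⟨hd, fun i => (hc i i.2 _).symm⟩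
  rw [daryTree, SimpleGraph.fromRel_adj, hrel, hrel]
  refine ⟨fun h => h.2.symm, fun hxy => ⟨?_, hxy.symm⟩⟩
  rintro rfl
  rcases hxy with ⟨hx, hxx⟩ | ⟨hx, hxx⟩ <;>
    · have := congrArg (fun z : Vertex d h => depth z) hxx
      simp only [depth_parent] at this
      omega

lemma exists_eq_child_iff {x y : Vertex d h} :
    (∃ (hx : depth x < h) (j : Fin d), y = child x hx j) ↔ 0 < depth y ∧ x = parent y := by
  constructor
  · rintro ⟨hx, j, rfl⟩
    exact ⟨Nat.succ_pos _, (eq_parent_iff (Nat.succ_pos _)).mpr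
      ⟨rfl, fun i hi _ => (child_coord_of_lt x hx j i _ hi).symm⟩⟩
  · rintro ⟨hy, hxy⟩
    obtain ⟨hd, hc⟩ := (eq_parent_iff hy).mp hxy
    have hx : depth x < h := by omega
    refine ⟨hx, y.2 ⟨depth x, by omega⟩, vertex_eq_iff.mpr ⟨hd.symm, fun i hy' hc' => ?_⟩⟩
    rcases (Nat.lt_succ_iff_lt_or_eq.mp hc') with hi | rfl
    · rw [child_coord_of_lt x hx _ i hc' hi, hc i hi hy']
    · rw [child_coord_depth]

lemma sum_neighborFinset (x : Vertex d h) (φ : Vertex d h → ℝ) :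
    ∑ y ∈ (daryTree d h).neighborFinset x, φ y =
      (if 0 < depth x then φ (parent x) else 0) +
        if hx : depth x < h then ∑ j, φ (child x hx j) else 0 := by
  have hsplit : ∀ y, (if (daryTree d h).Adj x y then φ y else 0) =
      (if 0 < depth x ∧ y = parent x then φ y else 0) +
        if 0 < depth y ∧ x = parent y then φ y else 0 := by
    intro y
    rw [adj_iff]
    by_cases h₁ : 0 < depth x ∧ y = parent x
    · have : ¬ (0 < depth y ∧ x = parent y) := fun h₂ => by
        have := congrArg (fun z : Vertex d h => depth z) h₁.2
        have := congrArg (fun z : Vertex d h => depth z) h₂.2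
        simp only [depth_parent] at *
        omega
      rw [if_pos (Or.inl h₁), if_pos h₁, if_neg this, add_zero]
    by_cases h₂ : 0 < depth y ∧ x = parent y
    · rw [if_pos (Or.inr h₂), if_neg h₁, if_pos h₂, zero_add]
    · rw [if_neg (not_or.mpr ⟨h₁, h₂⟩), if_neg h₁, if_neg h₂, add_zero]
  rw [SimpleGraph.neighborFinset_eq_filter, sum_filter, sum_congr rfl fun y _ => hsplit y,
    sum_add_distrib]
  congr 1
  · split_ifs with hx <;> simp [hx]
  · split_ifs with hx
    · rw [← sum_filter, ← sum_image fun j _ j' _ => (child_injective x hx ·)]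
      congr 1
      ext y
      simp only [mem_filter, mem_univ, true_and, mem_image, ← exists_eq_child_iff]
      exact ⟨fun ⟨_, j, hj⟩ => ⟨j, hj.symm⟩, fun ⟨j, hj⟩ => ⟨hx, j, hj.symm⟩⟩
    · exact sum_eq_zero fun y _ => if_neg fun hy => hx (exists_eq_child_iff.mpr hy).1

def root : Vertex d h := ⟨0, Fin.elim0⟩

lemma reachable_root (x : Vertex d h) : (daryTree d h).Reachable root x := by
  induction hn : depth x generalizing x with
  | zero =>
    have : root = x := vertex_eq_iff.mpr ⟨hn.symm, fun i hi => absurd hi (Nat.not_lt_zero i)⟩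
    exact this ▸ .refl _
  | succ n ih =>
    have hx : 0 < depth x := by omega
    exact (ih (parent x) (by simp [hn])).trans
      ((adj_iff _ _).mpr (.inr ⟨hx, rfl⟩)).reachable

lemma preconnected : (daryTree d h).Preconnected := fun x y =>
  (reachable_root x).symm.trans (reachable_root y)

/-- `x` and `y` have a common ancestor at depth `k`. -/
def AgreeUpTo (x y : Vertex d h) (k : ℕ) : Prop :=
  k ≤ depth x ∧ k ≤ depth y ∧
    ∀ i (hx : i < depth x) (hy : i < depth y), i < k → x.2 ⟨i, hx⟩ = y.2 ⟨i, hy⟩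

noncomputable def lcaDepth (x y : Vertex d h) : ℕ := Nat.findGreatest (AgreeUpTo x y) h

lemma agreeUpTo_lcaDepth (x y : Vertex d h) : AgreeUpTo x y (lcaDepth x y) :=
  Nat.findGreatest_spec (P := AgreeUpTo x y) (Nat.zero_le h)
    ⟨Nat.zero_le _, Nat.zero_le _, fun _ _ _ hi => absurd hi (Nat.not_lt_zero _)⟩

lemma le_lcaDepth_iff {x y : Vertex d h} {k : ℕ} : k ≤ lcaDepth x y ↔ AgreeUpTo x y k := by
  refine ⟨fun hk => ?_, fun hk => Nat.le_findGreatest (hk.1.trans (depth_le x)) hk⟩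
  obtain ⟨hx, hy, hc⟩ := agreeUpTo_lcaDepth x y
  exact ⟨by omega, by omega, fun i hix hiy hi => hc i hix hiy (by omega)⟩

lemma lcaDepth_le_left (x y : Vertex d h) : lcaDepth x y ≤ depth x :=
  (agreeUpTo_lcaDepth x y).1

lemma lcaDepth_self (x : Vertex d h) : lcaDepth x x = depth x :=
  (lcaDepth_le_left x x).antisymm (le_lcaDepth_iff.mpr ⟨le_rfl, le_rfl, fun _ _ _ _ => rfl⟩)

lemma lcaDepth_eq_of_isLCA {u v c : Vertex d h} (hcu : isAncestor c u) (hcv : isAncestor c v)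
    (hlca : ∀ a, isAncestor a u → isAncestor a v → depth a ≤ depth c) :
    lcaDepth u v = depth c := by
  obtain ⟨hcu, hcu'⟩ := hcu
  obtain ⟨hcv, hcv'⟩ := hcv
  refine le_antisymm ?_ (le_lcaDepth_iff.mpr ⟨hcu, hcv, fun i hu hv hi =>
    (hcu' ⟨i, hi⟩).symm.trans (hcv' ⟨i, hi⟩)⟩)
  obtain ⟨hu, hv, hc⟩ := agreeUpTo_lcaDepth u v
  exact hlca (take u _ hu) ⟨hu, fun _ => rfl⟩ ⟨hv, fun i => hc i _ _ i.2⟩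

lemma depth_lt_of_lcaDepth_eq {x v : Vertex d h} (hxv : x ≠ v) (hℓ : lcaDepth x v = depth x) :
    depth x < depth v := by
  obtain ⟨-, hv, hc⟩ := agreeUpTo_lcaDepth x v
  by_contra hle
  exact hxv (vertex_eq_iff.mpr ⟨by omega, fun i hx hv' => hc i hx hv' (by omega)⟩)

section Neighbors

variable {x v : Vertex d h}

lemma lcaDepth_parent_of_lt (hℓ : lcaDepth x v < depth x) :
    lcaDepth (parent x) v = lcaDepth x v := by
  obtain ⟨hx, hv, hc⟩ := agreeUpTo_lcaDepth x v
  obtain ⟨hx', hv', hc'⟩ := agreeUpTo_lcaDepth (parent x) v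
  simp only [depth_parent] at hx'
  refine le_antisymm (le_lcaDepth_iff.mpr ⟨by omega, hv', fun i hix hiv hi =>
    hc' i (by simp; omega) hiv hi⟩) (le_lcaDepth_iff.mpr ⟨by simp; omega, hv,
    fun i hix hiv hi => hc i (by omega) hiv hi⟩)

lemma lcaDepth_parent_of_eq (hℓ : lcaDepth x v = depth x) :
    lcaDepth (parent x) v = depth x - 1 := by
  obtain ⟨hx, hv, hc⟩ := agreeUpTo_lcaDepth x v
  refine le_antisymm (by simpa using lcaDepth_le_left (parent x) v)
    (le_lcaDepth_iff.mpr ⟨by simp, by omega, fun i hix hiv hi => hc i (by omega) hiv ?_⟩)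
  simp at hix
  omega

lemma lcaDepth_child_of_lt (hℓ : lcaDepth x v < depth x) (hx : depth x < h) (j : Fin d) :
    lcaDepth (child x hx j) v = lcaDepth x v := by
  obtain ⟨hx', hv, hc⟩ := agreeUpTo_lcaDepth x v
  obtain ⟨hcx, hcv, hcc⟩ := agreeUpTo_lcaDepth (child x hx j) v
  have := depth_child x hx j
  have hmin : min (lcaDepth (child x hx j) v) (depth x) ≤ lcaDepth x v :=
    le_lcaDepth_iff.mpr ⟨min_le_right _ _, (min_le_left _ _).trans hcv, fun i hix hiv hi => by
      rw [← child_coord_of_lt x hx j i (by omega) hix]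
      exact hcc i _ hiv (lt_min_iff.mp hi).1⟩
  refine le_antisymm (by omega) (le_lcaDepth_iff.mpr ⟨by simp; omega, hv,
    fun i hix hiv hi => ?_⟩)
  rw [child_coord_of_lt x hx j i hix (by omega)]
  exact hc i _ hiv hi

lemma lcaDepth_child_of_eq (hℓ : lcaDepth x v = depth x) (hxv : depth x < depth v)
    (hx : depth x < h) (j : Fin d) :
    lcaDepth (child x hx j) v = if j = v.2 ⟨depth x, hxv⟩ then depth x + 1 else depth x := by
  obtain ⟨-, -, hc⟩ := agreeUpTo_lcaDepth x v
  have := depth_child x hx j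
  have hagree : ∀ i (hix : i < depth (child x hx j)) (hiv : i < depth v), i < depth x →
      (child x hx j).2 ⟨i, hix⟩ = v.2 ⟨i, hiv⟩ := fun i hix hiv hi => by
    rw [child_coord_of_lt x hx j i hix hi]
    exact hc i hi hiv (by omega)
  split_ifs with hj
  · refine le_antisymm (lcaDepth_le_left _ _) (le_lcaDepth_iff.mpr ⟨le_rfl, hxv,
      fun i hix hiv hi => ?_⟩)
    rcases Nat.lt_succ_iff_lt_or_eq.mp hi with hi | rfl
    · exact hagree i hix hiv hi
    · rw [child_coord_depth, hj]
  · refine le_antisymm ?_ (le_lcaDepth_iff.mpr ⟨by simp, hxv.le, fun i hix hiv hi =>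
      hagree i hix hiv hi⟩)
    by_contra hlt
    obtain ⟨-, -, hcc⟩ := agreeUpTo_lcaDepth (child x hx j) v
    exact hj ((child_coord_depth x hx j (by omega)).symm.trans
      (hcc (depth x) (by omega) hxv (by omega)))

end Neighbors

lemma sum_neighborFinset_lcaDepth_sub {x v : Vertex d h} (hxv : x ≠ v) :
    ∑ y ∈ (daryTree d h).neighborFinset x, ((lcaDepth y v : ℝ) - lcaDepth x v) =
      if depth x = 0 then 1 else 0 := by
  rw [sum_neighborFinset]
  rcases (lcaDepth_le_left x v).lt_or_eq with hlt | heq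
  · simp [lcaDepth_parent_of_lt hlt, lcaDepth_child_of_lt hlt, show depth x ≠ 0 by omega]
  · -- `x` is a proper ancestor of `v`: only its child towards `v` and its parent move the LCA
    have hxv' := depth_lt_of_lcaDepth_eq hxv heq
    have hx : depth x < h := by omega
    have hchild : ∀ j, (lcaDepth (child x hx j) v : ℝ) - lcaDepth x v =
        if j = v.2 ⟨depth x, hxv'⟩ then 1 else 0 := fun j => by
      rw [lcaDepth_child_of_eq heq hxv' hx, heq]
      split_ifs <;> simp
    rw [dif_pos hx, sum_congr rfl fun j _ => hchild j, sum_ite_eq', if_pos (mem_univ _)]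
    rcases Nat.eq_zero_or_pos (depth x) with h0 | h0
    · simp [h0]
    · rw [if_pos h0, lcaDepth_parent_of_eq heq, heq, Nat.cast_sub h0, if_neg h0.ne']
      ring

lemma sum_neighborFinset_f_sub (x : Vertex d h) :
    ∑ y ∈ (daryTree d h).neighborFinset x, (f (h - depth x) d - f (h - depth y) d + 1) =
      if depth x = 0 then 2 * d * ∑ i ∈ range h, (d : ℝ) ^ i else 0 := by
  rw [sum_neighborFinset]
  simp only [depth_parent, depth_child, sum_const, card_univ, Fintype.card_fin, nsmul_eq_mul]
  rcases Nat.eq_zero_or_pos (depth x) with h0 | h0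
  · rw [if_neg (by omega), if_pos h0, zero_add, h0]
    rcases Nat.eq_zero_or_pos h with rfl | hh
    · simp
    · obtain ⟨n, rfl⟩ : ∃ n, h = n + 1 := ⟨h - 1, by omega⟩
      rw [dif_pos hh, Nat.sub_zero, zero_add, Nat.add_sub_cancel]
      linear_combination (d : ℝ) * f_succ_sub d n
  · rw [if_pos h0, if_neg h0.ne']
    rcases (depth_le x).lt_or_eq with hx | hx
    · obtain ⟨n, hn⟩ : ∃ n, h - depth x = n + 1 := ⟨h - depth x - 1, by omega⟩
      rw [dif_pos hx, hn, show h - (depth x - 1) = n + 1 + 1 by omega,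
        show h - (depth x + 1) = n by omega]
      linear_combination (-1 : ℝ) * f_succ_sub d (n + 1) + (d : ℝ) * f_succ_sub d n
        - 2 * geom_sum_succ (x := (d : ℝ)) (n := n + 1)
    · rw [dif_neg (by omega), hx, Nat.sub_self, show h - (h - 1) = 0 + 1 by omega, add_zero]
      linear_combination (-1 : ℝ) * f_succ_sub d 0 - 2 * sum_range_one (fun i => (d : ℝ) ^ i)

/-- Up to the additive constant `potential v v`, the closed form of the hitting time of `v`:
by `f_sub_g`, the term `f (h - c) - g h c` of the formula is affine in the depth `c` of the LCA. -/
noncomputable def potential (v x : Vertex d h) : ℝ :=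
  -(2 * d * ∑ i ∈ range h, (d : ℝ) ^ i) * lcaDepth x v - f (h - depth x) d

lemma sum_neighborFinset_potential_sub {x v : Vertex d h} (hxv : x ≠ v) :
    ∑ y ∈ (daryTree d h).neighborFinset x, (potential v y - potential v x + 1) = 0 := by
  have hsplit : ∀ y, potential v y - potential v x + 1 =
      -(2 * d * ∑ i ∈ range h, (d : ℝ) ^ i) * ((lcaDepth y v : ℝ) - lcaDepth x v) +
        (f (h - depth x) d - f (h - depth y) d + 1) := fun y => by
    rw [potential, potential]
    ring
  rw [sum_congr rfl fun y _ => hsplit y, sum_add_distrib, ← mul_sum,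
    sum_neighborFinset_lcaDepth_sub hxv, sum_neighborFinset_f_sub]
  split_ifs <;> ring

end daryTree

theorem stmt_16_general (d h : ℕ)
    (u v c : Σ n : Fin (h + 1), Fin (n : ℕ) → Fin d)
    (hcu : isAncestor c u) (hcv : isAncestor c v)
    (hlca : ∀ a, isAncestor a u → isAncestor a v → (a.1 : ℕ) ≤ (c.1 : ℕ)) :
    hittingTime (daryTree d h) u v =
      f (h - (c.1 : ℕ)) d - f (h - (u.1 : ℕ)) d + g h (v.1 : ℕ) d - g h (c.1 : ℕ) d := by
  rw [hittingTime_eq_sub_of_laplacian _ daryTree.preconnected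
      (fun x hx => daryTree.sum_neighborFinset_potential_sub hx) u, daryTree.potential,
    daryTree.potential, daryTree.lcaDepth_eq_of_isLCA hcu hcv hlca, daryTree.lcaDepth_self]
  linear_combination f_sub_g d (daryTree.depth_le v) - f_sub_g d (daryTree.depth_le c)

theorem stmt_16 (d h : ℕ) (hd : 1 ≤ d)
    (u v c : Σ n : Fin (h + 1), Fin (n : ℕ) → Fin d)
    (hcu : isAncestor c u) (hcv : isAncestor c v)
    (hlca : ∀ a, isAncestor a u → isAncestor a v → (a.1 : ℕ) ≤ (c.1 : ℕ)) :
    hittingTime (daryTree d h) u v =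
      f (h - (c.1 : ℕ)) d - f (h - (u.1 : ℕ)) d + g h (v.1 : ℕ) d - g h (c.1 : ℕ) d :=
  stmt_16_general d h u v c hcu hcv hlca
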